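/- Let T be a weighted monogamous trigraph with a switchable pair ab. Then α(T_{a→S}) = α(T_{b→S}) = α(T_{a→K}) = α(T_{b→K}) = α(T). -/

import Mathlib

structure Trigraph (V : Type*) where
  θ : V → V → ℤ
  symm : ∀ u v, θ u v = θ v u
  range : ∀ u v, u ≠ v → θ u v = -1 ∨ θ u v = 0 ∨ θ u v = 1

namespace Trigraph

variable {V : Type*}

/-- `u` and `v` form a strong edge. -/
def SEdge (T : Trigraph V) (u v : V) : Prop := u ≠ v ∧ T.θ u v = 1

/-- `u` and `v` form a strong antiedge. -/
def SAnti (T : Trigraph V) (u v : V) : Prop := u ≠ v ∧ T.θ u v = -1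

/-- `u` and `v` form a switchable pair. -/
def Switch (T : Trigraph V) (u v : V) : Prop := u ≠ v ∧ T.θ u v = 0

/-- `u` and `v` are adjacent. -/
def Adj (T : Trigraph V) (u v : V) : Prop := u ≠ v ∧ (T.θ u v = 0 ∨ T.θ u v = 1)

/-- `u` and `v` are antiadjacent. -/
def Anti (T : Trigraph V) (u v : V) : Prop := u ≠ v ∧ (T.θ u v = -1 ∨ T.θ u v = 0)

instance [DecidableEq V] (T : Trigraph V) (u v : V) : Decidable (T.Adj u v) :=
  inferInstanceAs (Decidable (u ≠ v ∧ (T.θ u v = 0 ∨ T.θ u v = 1)))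

instance [DecidableEq V] (T : Trigraph V) (u v : V) : Decidable (T.Anti u v) :=
  inferInstanceAs (Decidable (u ≠ v ∧ (T.θ u v = -1 ∨ T.θ u v = 0)))

instance [DecidableEq V] (T : Trigraph V) (u v : V) : Decidable (T.Switch u v) :=
  inferInstanceAs (Decidable (u ≠ v ∧ T.θ u v = 0))

instance [DecidableEq V] (T : Trigraph V) (u v : V) : Decidable (T.SAnti u v) :=
  inferInstanceAs (Decidable (u ≠ v ∧ T.θ u v = -1))

/-- A trigraph is monogamous if every vertex is in at most one switchable pair. -/
def Monogamous (T : Trigraph V) : Prop :=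
  ∀ v u w : V, T.Switch v u → T.Switch v w → u = w

/-- The complement trigraph. -/
def compl (T : Trigraph V) : Trigraph V where
  θ := fun u v => -(T.θ u v)
  symm := fun u v => congrArg Neg.neg (T.symm u v)
  range := fun u v h => by
    have := T.range u v h
    omega

def IsBull (T : Trigraph V) (x1 x2 x3 y z : V) : Prop :=
  T.Adj x1 x2 ∧ T.Adj x1 x3 ∧ T.Adj x2 x3 ∧
  T.Adj y x1 ∧ T.Anti y x2 ∧ T.Anti y x3 ∧ T.Anti y z ∧
  T.Adj z x2 ∧ T.Anti z x1 ∧ T.Anti z x3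

def BullFree (T : Trigraph V) : Prop := ∀ x1 x2 x3 y z : V, ¬ T.IsBull x1 x2 x3 y z

/-- `S` is strongly complete to `A`. -/
def SComplete (T : Trigraph V) (S A : Set V) : Prop := ∀ s ∈ S, ∀ a ∈ A, T.SEdge s a

/-- `S` is strongly anticomplete to `A`. -/
def SAnticomplete (T : Trigraph V) (S A : Set V) : Prop := ∀ s ∈ S, ∀ a ∈ A, T.SAnti s a

/-- A homogeneous set. -/
def HomSet (T : Trigraph V) (X : Set V) : Prop :=
  1 < X.ncard ∧ X.ncard < Nat.card V ∧
  ∀ v ∉ X, (∀ a ∈ X, T.SEdge v a) ∨ (∀ a ∈ X, T.SAnti v a)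

/-- `(A,B,C,D,E,F)` is a split of the homogeneous pair `(A,B)`. -/
def IsSplit (T : Trigraph V) (A B C D E F : Set V) : Prop :=
  A.Nonempty ∧ B.Nonempty ∧ Disjoint A B ∧
  Disjoint C D ∧ Disjoint C E ∧ Disjoint C F ∧
  Disjoint D E ∧ Disjoint D F ∧ Disjoint E F ∧
  C ∪ D ∪ E ∪ F = (A ∪ B)ᶜ ∧
  T.SComplete A (C ∪ E) ∧ T.SAnticomplete A (D ∪ F) ∧
  T.SComplete B (D ∪ E) ∧ T.SAnticomplete B (C ∪ F) ∧
  ¬ T.SComplete A B ∧ ¬ T.SAnticomplete A B ∧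
  3 ≤ (A ∪ B).ncard ∧ 3 ≤ (C ∪ D ∪ E ∪ F).ncard

/-- `(A,B)` is a homogeneous pair. -/
def HomPair (T : Trigraph V) (A B : Set V) : Prop := ∃ C D E F, T.IsSplit A B C D E F

/-- A small homogeneous pair. -/
def SmallHomPair (T : Trigraph V) (A B : Set V) : Prop :=
  T.HomPair A B ∧ (A ∪ B).ncard ≤ 6

/-- A proper homogeneous pair. -/
def ProperHomPair (T : Trigraph V) (A B : Set V) : Prop :=
  ∃ C D E F, T.IsSplit A B C D E F ∧ C.Nonempty ∧ D.Nonempty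

/-- `(X, Xᶜ)` is a decomposition of `T`. -/
def Decomp (T : Trigraph V) (X : Set V) : Prop :=
  T.HomSet X ∨ ∃ A B, X = A ∪ B ∧ (T.SmallHomPair A B ∨ T.ProperHomPair A B)

/-- `(X, Xᶜ)` is a homogeneous cut of `T`. -/
def HomCut (T : Trigraph V) (X : Set V) : Prop :=
  T.HomSet X ∨ ∃ A B, X = A ∪ B ∧ T.ProperHomPair A B

/-- A minimally-sided homogeneous cut. -/
def MinSidedHomCut (T : Trigraph V) (X : Set V) : Prop :=
  T.HomCut X ∧ ∀ X' : Set V, T.HomCut X' → ¬ X' ⊂ X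

/-- The induced subtrigraph on `X`. -/
def induce (T : Trigraph V) (X : Set V) : Trigraph X where
  θ := fun u v => T.θ u v
  symm := fun u v => T.symm u v
  range := fun u v h => T.range u v (fun hh => h (Subtype.ext hh))

open Classical in
/-- The trigraph obtained from `T[X]` by adding two marker vertices joined by a switchable
pair, the first strongly complete to (the trace in `X` of) `P` and strongly anticomplete to
the rest of `X`, the second strongly complete to `Q` and strongly anticomplete to the rest. -/
noncomputable def augment2 (T : Trigraph V) (X P Q : Set V) : Trigraph (↥X ⊕ Fin 2) where
  θ := fun u v =>
    match u, v with
    | Sum.inl u, Sum.inl v => T.θ u v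
    | Sum.inl u, Sum.inr i => if (i = 0 ∧ (u : V) ∈ P) ∨ (i = 1 ∧ (u : V) ∈ Q) then 1 else -1
    | Sum.inr i, Sum.inl u => if (i = 0 ∧ (u : V) ∈ P) ∨ (i = 1 ∧ (u : V) ∈ Q) then 1 else -1
    | Sum.inr _, Sum.inr _ => 0
  symm := by
    rintro (u | i) (v | j)
    · exact T.symm u v
    · rfl
    · rfl
    · rfl
  range := by
    rintro (u | i) (v | j) h
    · exact T.range u v fun hh => h (by rw [Subtype.ext hh])
    · dsimp only; split <;> simp
    · dsimp only; split <;> simp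
    · simp

/-- The block of decomposition `T_X` for a proper homogeneous pair `(A,B)`:
`T[A ∪ B]` together with marker vertices `c` (strongly complete to `A`) and `d`
(strongly complete to `B`), with `cd` a switchable pair. -/
noncomputable def blockXPair (T : Trigraph V) (A B : Set V) : Trigraph (↥(A ∪ B) ⊕ Fin 2) :=
  T.augment2 (A ∪ B) A B

/-- The block of decomposition `T_Y` for a homogeneous pair `(A,B)` with split
`(A,B,C,D,E,F)` : `T[Y]` (where `Y = (A ∪ B)ᶜ`) together with marker vertices `a`
(strongly complete to `C ∪ E`) and `b` (strongly complete to `D ∪ E`), with `ab` a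
switchable pair. -/
noncomputable def blockYPair (T : Trigraph V) (A B C D E : Set V) : Trigraph (↥(A ∪ B)ᶜ ⊕ Fin 2) :=
  T.augment2 (A ∪ B)ᶜ (C ∪ E) (D ∪ E)


/-- A strong clique: vertices pairwise strongly adjacent. -/
def StrongClique (T : Trigraph V) (K : Set V) : Prop := K.Pairwise T.SEdge

/-- A strong stable set: vertices pairwise strongly antiadjacent. -/
def StrongStable (T : Trigraph V) (K : Set V) : Prop := K.Pairwise T.SAnti

/-- `T[X]` is triangle-free. -/
def TriangleFreeOn (T : Trigraph V) (X : Set V) : Prop :=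
  ∀ x ∈ X, ∀ y ∈ X, ∀ z ∈ X, ¬ (T.Adj x y ∧ T.Adj x z ∧ T.Adj y z)

/-- Membership in the basic class `𝒯₁`. -/
def InT1 (T : Trigraph V) : Prop :=
  T.Monogamous ∧ ∃ (X : Set V) (t : ℕ) (K : Fin t → Set V),
    (X ∪ ⋃ i, K i) = Set.univ ∧
    (∀ i, Disjoint X (K i)) ∧ (∀ i j, i ≠ j → Disjoint (K i) (K j)) ∧
    T.TriangleFreeOn X ∧ (∀ i, T.StrongClique (K i)) ∧
    (∀ i j, i ≠ j → T.SAnticomplete (K i) (K j)) ∧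
    (∀ i, ∀ v ∈ K i, ∃ A B : Set V,
      A ∪ B = {x ∈ X | T.Adj v x} ∧ Disjoint A B ∧
      T.StrongStable A ∧ T.StrongStable B ∧ T.SComplete A B)

/-- Membership in the basic class `𝒯₀`: monogamous trigraphs on at most 8 vertices. -/
def InT0 (T : Trigraph V) : Prop := T.Monogamous ∧ Nat.card V ≤ 8

/-- A basic trigraph: a member of `𝒯₀ ∪ 𝒯₁ ∪ 𝒯₁bar`. -/
def Basic (T : Trigraph V) : Prop := T.InT0 ∨ T.InT1 ∨ T.compl.InT1

/-- `h` lists the vertices of a hole of length `k` in `T`. -/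
def IsHole (T : Trigraph V) (k : ℕ) (h : Fin k → V) : Prop :=
  4 ≤ k ∧ Function.Injective h ∧ ∀ i j : Fin k,
    (((i.val + 1) % k = j.val ∨ (j.val + 1) % k = i.val) → T.Adj (h i) (h j)) ∧
    (i ≠ j → ¬ ((i.val + 1) % k = j.val ∨ (j.val + 1) % k = i.val) → T.Anti (h i) (h j))

def HasOddHole (T : Trigraph V) : Prop := ∃ k, Odd k ∧ ∃ h : Fin k → V, T.IsHole k h

/-- A Berge trigraph: no odd hole and no odd antihole. -/
def Berge (T : Trigraph V) : Prop := ¬ T.HasOddHole ∧ ¬ T.compl.HasOddHole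

/-- `(wv, we)` are legitimate weights for the trigraph `T`: `we` is symmetric and for every
switchable pair `uv` we have `max (wv u) (wv v) ≤ we u v ≤ wv u + wv v`. -/
def GoodWeights (T : Trigraph V) (wv : V → ℕ) (we : V → V → ℕ) : Prop :=
  (∀ u v, we u v = we v u) ∧
  ∀ u v, T.Switch u v → max (wv u) (wv v) ≤ we u v ∧ we u v ≤ wv u + wv v

/-- `S` is a stable set of `T`. -/
def StableF (T : Trigraph V) (S : Finset V) : Prop :=
  ∀ u ∈ S, ∀ v ∈ S, u ≠ v → T.Anti u v

open Classical in
/-- The weight of a stable set `S`: the sum of the weights of the vertices of `S` that are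
strongly antiadjacent to every other vertex of `S`, plus the sum of the weights of the
switchable pairs with both ends in `S`. -/
noncomputable def weightF (T : Trigraph V) (wv : V → ℕ) (we : V → V → ℕ) (S : Finset V) : ℕ :=
  (∑ v ∈ S.filter (fun v => ∀ u ∈ S, u ≠ v → T.SAnti u v), wv v)
    + (∑ u ∈ S, ∑ v ∈ S, if T.Switch u v then we u v else 0) / 2

open Classical in
/-- The maximum weight of a stable set of `T` contained in `X`. -/
noncomputable def alphaOn [Fintype V] (T : Trigraph V) (wv : V → ℕ) (we : V → V → ℕ)
    (X : Set V) : ℕ :=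
  (Finset.univ.powerset.filter fun S : Finset V => ↑S ⊆ X ∧ T.StableF S).sup (T.weightF wv we)

/-- The maximum weight of a stable set of `T`. -/
noncomputable def alphaW [Fintype V] (T : Trigraph V) (wv : V → ℕ) (we : V → V → ℕ) : ℕ :=
  T.alphaOn wv we Set.univ

open Classical in
/-- The trigraph `T_{a → S}` obtained from `T` by turning the switchable pair `ab` into a
strong edge and adding a new vertex `a' = none` strongly complete to `N(a) ∖ {b}` and
strongly anticomplete to everything else (including `a`). -/
noncomputable def expandS (T : Trigraph V) (a b : V) : Trigraph (Option V) where
  θ := fun u v =>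
    match u, v with
    | some u, some v => if (u = a ∧ v = b) ∨ (u = b ∧ v = a) then 1 else T.θ u v
    | some u, none => if T.Adj a u ∧ u ≠ b then 1 else -1
    | none, some v => if T.Adj a v ∧ v ≠ b then 1 else -1
    | none, none => -1
  symm := by
    rintro (_ | u) (_ | v)
    · rfl
    · rfl
    · rfl
    · dsimp only
      have hiff : ((u = a ∧ v = b) ∨ (u = b ∧ v = a)) ↔ ((v = a ∧ u = b) ∨ (v = b ∧ u = a)) := by
        tauto
      rw [if_congr hiff rfl (T.symm u v)]
  range := by
    rintro (_ | u) (_ | v) h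
    · exact absurd rfl h
    · dsimp only; split <;> simp
    · dsimp only; split <;> simp
    · dsimp only
      split
      · simp
      · exact T.range u v fun hh => h (by rw [hh])

open Classical in
/-- The trigraph `T_{a → K}`, defined like `T_{a → S}` except that the new vertex `a'` is in
addition strongly adjacent to `a`. -/
noncomputable def expandK (T : Trigraph V) (a b : V) : Trigraph (Option V) where
  θ := fun u v =>
    match u, v with
    | some u, some v => if (u = a ∧ v = b) ∨ (u = b ∧ v = a) then 1 else T.θ u v
    | some u, none => if (T.Adj a u ∧ u ≠ b) ∨ u = a then 1 else -1
    | none, some v => if (T.Adj a v ∧ v ≠ b) ∨ v = a then 1 else -1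
    | none, none => -1
  symm := by
    rintro (_ | u) (_ | v)
    · rfl
    · rfl
    · rfl
    · dsimp only
      have hiff : ((u = a ∧ v = b) ∨ (u = b ∧ v = a)) ↔ ((v = a ∧ u = b) ∨ (v = b ∧ u = a)) := by
        tauto
      rw [if_congr hiff rfl (T.symm u v)]
  range := by
    rintro (_ | u) (_ | v) h
    · exact absurd rfl h
    · dsimp only; split <;> simp
    · dsimp only; split <;> simp
    · dsimp only
      split
      · simp
      · exact T.range u v fun hh => h (by rw [hh])

/-- Vertex weights for `T_{a → S}`. -/
def wvS (wv : V → ℕ) (we : V → V → ℕ) (a b : V) [DecidableEq V] : Option V → ℕ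
  | some v => if v = a then wv a + wv b - we a b else wv v
  | none => we a b - wv b

/-- Vertex weights for `T_{a → K}`. -/
def wvK (wv : V → ℕ) (we : V → V → ℕ) (a b : V) : Option V → ℕ
  | some v => wv v
  | none => we a b - wv b

/-- Switchable-pair weights for `T_{a → S}` and `T_{a → K}`. -/
def weO (we : V → V → ℕ) : Option V → Option V → ℕ
  | some u, some v => we u v
  | _, _ => 0

end Trigraph

/-!
A stable set `S` of `T` splits into its trace `S₀ = S ∖ {a, b}` and its trace on `{a, b}`;
by monogamy these two parts are strongly anticomplete, so their weights add. Which traces on the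
pair are allowed depends only on whether `S₀` is strongly anticomplete to `a` and to `b`, and
accordingly the best one contributes `w(ab)`, `w(a)`, `w(b)` or `0`. The same holds in the
expansions with `{a, b}` replaced by `{a, b, a'}`: there `ab` is a strong edge and `a'` sees `S₀`
exactly as `a` does, and the weights are chosen so that the best choices (`{b, a'}` and
`{a, a'}` in `T_{a→S}`, `{b, a'}` and `{a}` in `T_{a→K}`) again contribute `w(ab)` and `w(a)`.
So all five values of `α` equal the maximum over `S₀` of `w(S₀)` plus that contribution.
-/

theorem Finset.even_sum_sum_of_symm {α : Type*} [DecidableEq α] (f : α → α → ℕ)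
    (hsymm : ∀ u v, f u v = f v u) (hdiag : ∀ u, f u u = 0) (s : Finset α) :
    Even (∑ u ∈ s, ∑ v ∈ s, f u v) := by
  induction s using Finset.induction_on with
  | empty => simp
  | insert x s hx ih =>
    have hsplit : ∑ u ∈ insert x s, ∑ v ∈ insert x s, f u v
        = 2 * ∑ v ∈ s, f x v + ∑ u ∈ s, ∑ v ∈ s, f u v := by
      simp only [Finset.sum_insert hx, hdiag, Finset.sum_add_distrib, hsymm _ x]
      ring
    rw [hsplit]
    exact (even_two_mul _).add ih

theorem Finset.sum_eq_of_subset_triple {α M : Type*} [DecidableEq α] [AddCommMonoid M]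
    {x y z : α} (hxy : x ≠ y) (hxz : x ≠ z) (hyz : y ≠ z) (f : α → M) {s : Finset α}
    (hs : s ⊆ {x, y, z}) : ∑ w ∈ s, f w =
      (if x ∈ s then f x else 0) + (if y ∈ s then f y else 0) + (if z ∈ s then f z else 0) := by
  rw [← Finset.inter_eq_right.mpr hs, ← Finset.sum_ite_mem, Finset.sum_insert (by simp [hxy, hxz]),
    Finset.sum_insert (by simp [hyz]), Finset.sum_singleton, add_assoc,
    Finset.inter_eq_right.mpr hs]

namespace Trigraph

section Basic

variable {V : Type*} {T : Trigraph V} {u v : V}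

theorem SAnti.symm (h : T.SAnti u v) : T.SAnti v u := ⟨h.1.symm, (T.symm v u).trans h.2⟩

theorem Switch.symm (h : T.Switch u v) : T.Switch v u := ⟨h.1.symm, (T.symm v u).trans h.2⟩

theorem Anti.symm (h : T.Anti u v) : T.Anti v u := ⟨h.1.symm, T.symm v u ▸ h.2⟩

theorem switch_comm : T.Switch u v ↔ T.Switch v u := ⟨Switch.symm, Switch.symm⟩

theorem SAnti.anti (h : T.SAnti u v) : T.Anti u v := ⟨h.1, Or.inl h.2⟩

theorem SAnti.not_switch (h : T.SAnti u v) : ¬T.Switch u v := fun hs => by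
  have := h.2.symm.trans hs.2
  omega

theorem SAnti.not_adj (h : T.SAnti u v) : ¬T.Adj u v := fun hadj => by
  have := h.2
  rcases hadj.2 with h' | h' <;> omega

theorem Anti.sAnti_of_not_switch (h : T.Anti u v) (hs : ¬T.Switch u v) : T.SAnti u v :=
  ⟨h.1, h.2.resolve_right fun h0 => hs ⟨h.1, h0⟩⟩

theorem Monogamous.sAnti_of_anti {a b : V} (hmono : T.Monogamous) (hab : T.Switch a b)
    (hub : u ≠ b) (h : T.Anti a u) : T.SAnti a u :=
  h.sAnti_of_not_switch fun hs => hub (hmono a u b hs hab)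

variable {S S₁ S₂ : Finset V}

theorem StrongStable.stableF (h : T.StrongStable ↑S) : T.StableF S :=
  fun _ hu _ hv huv => (h hu hv huv).anti

theorem StableF.mono (h : T.StableF S) (hsub : S₁ ⊆ S) : T.StableF S₁ :=
  fun u hu v hv => h u (hsub hu) v (hsub hv)

theorem StableF.map {W : Type*} {T' : Trigraph W} (e : V ↪ W) (h : T.StableF S)
    (hθ : ∀ u ∈ S, ∀ v ∈ S, T'.θ (e u) (e v) = T.θ u v) : T'.StableF (S.map e) := by
  simp only [StableF, Finset.forall_mem_map, e.injective.ne_iff]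
  intro u hu v hv huv
  exact ⟨e.injective.ne huv, hθ u hu v hv ▸ (h u hu v hv huv).2⟩

open Classical in
theorem le_alphaW [Fintype V] {wv : V → ℕ} {we : V → V → ℕ} (hS : T.StableF S) :
    T.weightF wv we S ≤ T.alphaW wv we :=
  Finset.le_sup (Finset.mem_filter.mpr
    ⟨Finset.mem_powerset.mpr (Finset.subset_univ S), Set.subset_univ _, hS⟩)

open Classical in
theorem alphaW_eq_sup [Fintype V] {wv : V → ℕ} {we : V → V → ℕ} {ι : Type*} (s : Finset ι)
    (f : ι → ℕ) (hle : ∀ S, T.StableF S → ∃ i ∈ s, T.weightF wv we S ≤ f i)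
    (hge : ∀ i ∈ s, ∃ S, T.StableF S ∧ f i ≤ T.weightF wv we S) :
    T.alphaW wv we = s.sup f := by
  refine le_antisymm (Finset.sup_le fun S hS => ?_) (Finset.sup_le fun i hi => ?_)
  · obtain ⟨i, hi, h⟩ := hle S (Finset.mem_filter.mp hS).2.2
    exact h.trans (Finset.le_sup hi)
  · obtain ⟨S, hS, h⟩ := hge i hi
    exact h.trans (le_alphaW hS)

variable [DecidableEq V]

theorem StableF.union (h₁ : T.StableF S₁) (h₂ : T.StableF S₂) (h : T.SAnticomplete ↑S₁ ↑S₂) :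
    T.StableF (S₁ ∪ S₂) := by
  intro u hu v hv huv
  rcases Finset.mem_union.mp hu with hu | hu <;> rcases Finset.mem_union.mp hv with hv | hv
  · exact h₁ u hu v hv huv
  · exact (h u hu v hv).anti
  · exact (h v hv u hu).symm.anti
  · exact h₂ u hu v hv huv

theorem stableF_pair (h : T.Anti u v) : T.StableF {u, v} := by
  intro x hx y hy hxy
  simp only [Finset.mem_insert, Finset.mem_singleton] at hx hy
  rcases hx with rfl | rfl <;> rcases hy with rfl | rfl
  exacts [absurd rfl hxy, h, h.symm, absurd rfl hxy]

theorem strongStable_pair (h : T.SAnti u v) : T.StrongStable ↑({u, v} : Finset V) := by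
  rw [Finset.coe_pair]
  exact Set.pairwise_pair.mpr fun _ => ⟨h, h.symm⟩

end Basic

section Weight

variable {V : Type*} [DecidableEq V] {T : Trigraph V} {wv : V → ℕ} {we : V → V → ℕ}
  {S S₁ S₂ : Finset V}

/-- `weightF` is elaborated with classical decidability instances; this is its body with the
instances coming from `DecidableEq V`, so that the usual `Finset` lemmas apply. -/
theorem weightF_def (S : Finset V) : T.weightF wv we S =
    (∑ v ∈ S.filter (fun v => ∀ u ∈ S, u ≠ v → T.SAnti u v), wv v)
      + (∑ u ∈ S, ∑ v ∈ S, if T.Switch u v then we u v else 0) / 2 := by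
  unfold weightF
  congr!

theorem weightF_union (hwe : ∀ u v, we u v = we v u) (hdisj : Disjoint S₁ S₂)
    (h : T.SAnticomplete ↑S₁ ↑S₂) :
    T.weightF wv we (S₁ ∪ S₂) = T.weightF wv we S₁ + T.weightF wv we S₂ := by
  have hfilter : (S₁ ∪ S₂).filter (fun v => ∀ u ∈ S₁ ∪ S₂, u ≠ v → T.SAnti u v)
      = S₁.filter (fun v => ∀ u ∈ S₁, u ≠ v → T.SAnti u v)
        ∪ S₂.filter (fun v => ∀ u ∈ S₂, u ≠ v → T.SAnti u v) := by
    rw [Finset.filter_union]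
    congr 1 <;> refine Finset.filter_congr fun v hv => ?_ <;> rw [Finset.forall_mem_union]
    · exact and_iff_left fun u hu _ => (h v hv u hu).symm
    · exact and_iff_right fun u hu _ => h u hu v hv
  have hpairs : ∑ u ∈ S₁ ∪ S₂, ∑ v ∈ S₁ ∪ S₂, (if T.Switch u v then we u v else 0)
      = ∑ u ∈ S₁, ∑ v ∈ S₁, (if T.Switch u v then we u v else 0)
        + ∑ u ∈ S₂, ∑ v ∈ S₂, (if T.Switch u v then we u v else 0) := by
    have h₁₂ : ∑ u ∈ S₁, ∑ v ∈ S₂, (if T.Switch u v then we u v else 0) = 0 :=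
      Finset.sum_eq_zero fun u hu => Finset.sum_eq_zero fun v hv => if_neg (h u hu v hv).not_switch
    have h₂₁ : ∑ u ∈ S₂, ∑ v ∈ S₁, (if T.Switch u v then we u v else 0) = 0 :=
      Finset.sum_eq_zero fun u hu => Finset.sum_eq_zero fun v hv =>
        if_neg (h v hv u hu).symm.not_switch
    simp only [Finset.sum_union hdisj, Finset.sum_add_distrib, h₁₂, h₂₁, add_zero, zero_add]
  -- the pair sum of `S₁` is even, so halving is additive
  obtain ⟨k, hk⟩ := Finset.even_sum_sum_of_symm (fun u v => if T.Switch u v then we u v else 0)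
    (fun u v => by simp only [switch_comm, hwe u v]) (fun u => if_neg fun hs => hs.1 rfl) S₁
  simp only [weightF_def, hfilter, hpairs,
    Finset.sum_union (hdisj.mono (Finset.filter_subset _ _) (Finset.filter_subset _ _))]
  omega

theorem weightF_eq_sum (h : T.StrongStable ↑S) : T.weightF wv we S = ∑ v ∈ S, wv v := by
  rw [weightF_def, Finset.filter_true_of_mem fun v hv u hu huv => h hu hv huv,
    Finset.sum_eq_zero fun u hu => Finset.sum_eq_zero fun v hv => if_neg ?_]
  · simp
  · exact fun hs => (h hu hv hs.1).not_switch hs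

theorem weightF_empty : T.weightF wv we ∅ = 0 := by
  simp [weightF_def]

theorem weightF_singleton (x : V) : T.weightF wv we {x} = wv x := by
  rw [weightF_eq_sum (by simp [StrongStable]), Finset.sum_singleton]

theorem weightF_pair (hwe : ∀ u v, we u v = we v u) {x y : V} (hxy : T.Switch x y) :
    T.weightF wv we {x, y} = we x y := by
  have hempty :
      ({x, y} : Finset V).filter (fun v => ∀ u ∈ ({x, y} : Finset V), u ≠ v → T.SAnti u v) = ∅ := by
    refine Finset.filter_false_of_mem fun v hv hall => ?_
    simp only [Finset.mem_insert, Finset.mem_singleton] at hv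
    rcases hv with rfl | rfl
    · exact (hall y (by simp) hxy.1.symm).symm.not_switch hxy
    · exact (hall x (by simp) hxy.1).not_switch hxy
  rw [weightF_def, hempty, Finset.sum_empty, Finset.sum_pair hxy.1, Finset.sum_pair hxy.1,
    Finset.sum_pair hxy.1, if_pos hxy, if_pos hxy.symm, if_neg fun hs => hs.1 rfl,
    if_neg fun hs => hs.1 rfl, hwe y x]
  omega

theorem weightF_map {W : Type*} [DecidableEq W] {T' : Trigraph W} {wv' : W → ℕ}
    {we' : W → W → ℕ} (e : V ↪ W) (hθ : ∀ u ∈ S, ∀ v ∈ S, T'.θ (e u) (e v) = T.θ u v)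
    (hwv : ∀ v ∈ S, wv' (e v) = wv v) (hwe : ∀ u ∈ S, ∀ v ∈ S, we' (e u) (e v) = we u v) :
    T'.weightF wv' we' (S.map e) = T.weightF wv we S := by
  have hSAnti : ∀ u ∈ S, ∀ v ∈ S, (T'.SAnti (e u) (e v) ↔ T.SAnti u v) := fun u hu v hv => by
    simp only [SAnti, e.injective.ne_iff, hθ u hu v hv]
  have hSwitch : ∀ u ∈ S, ∀ v ∈ S, (T'.Switch (e u) (e v) ↔ T.Switch u v) := fun u hu v hv => by
    simp only [Switch, e.injective.ne_iff, hθ u hu v hv]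
  rw [weightF_def, weightF_def, Finset.filter_map, Finset.sum_map, Finset.sum_map]
  congr 1
  · refine Finset.sum_congr (Finset.filter_congr fun v hv => ?_)
      fun v hv => hwv v (Finset.mem_filter.mp hv).1
    simp only [Function.comp_apply, Finset.forall_mem_map, e.injective.ne_iff]
    exact forall₂_congr fun u hu => by rw [hSAnti u hu v hv]
  · refine congrArg (· / 2) (Finset.sum_congr rfl fun u hu => ?_)
    rw [Finset.sum_map]
    exact Finset.sum_congr rfl fun v hv => if_congr (hSwitch u hu v hv) (hwe u hu v hv) rfl

theorem weightF_eq_sdiff_add_inter (hwe : ∀ u v, we u v = we v u) (hS : T.StableF S)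
    (P : Finset V) (hP : ∀ x ∈ P, ∀ y ∉ P, ¬T.Switch x y) :
    T.weightF wv we S = T.weightF wv we (S \ P) + T.weightF wv we (S ∩ P) := by
  conv_lhs => rw [← Finset.sdiff_union_inter S P]
  refine weightF_union hwe (Finset.disjoint_sdiff_inter S P) fun u hu v hv => ?_
  obtain ⟨huS, huP⟩ := Finset.mem_sdiff.mp hu
  obtain ⟨hvS, hvP⟩ := Finset.mem_inter.mp hv
  exact (hS u huS v hvS fun h => huP (h ▸ hvP)).sAnti_of_not_switch
    fun hs => hP v hvP u huP hs.symm

end Weight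

section Pair

variable {V : Type*} {T : Trigraph V} {wv : V → ℕ} {we : V → V → ℕ} {a b : V}

/-- The weight contributed by the switchable pair `ab` to a stable set containing `a` exactly
when `p` holds and `b` exactly when `q` holds. -/
def pairWeight (wv : V → ℕ) (we : V → V → ℕ) (a b : V) : Bool → Bool → ℕ
  | true, true => we a b
  | true, false => wv a
  | false, true => wv b
  | false, false => 0

theorem pairWeight_mono (ha : wv a ≤ we a b) (hb : wv b ≤ we a b) {p q p' q' : Bool}
    (hp : p → p') (hq : q → q') : pairWeight wv we a b p q ≤ pairWeight wv we a b p' q' := by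
  cases p <;> cases q <;> cases p' <;> cases q' <;> simp_all [pairWeight]

variable [DecidableEq V] {S : Finset V}

open Classical in
/-- The common value of `α(T)` and of `α` of the four expansions: the best weight of a stable
set `S₀` avoiding `a` and `b`, plus the best contribution of the pair that `S₀` allows. -/
noncomputable def alphaSplit [Fintype V] (T : Trigraph V) (wv : V → ℕ) (we : V → V → ℕ)
    (a b : V) : ℕ :=
  (Finset.univ.filter fun S₀ : Finset V => a ∉ S₀ ∧ b ∉ S₀ ∧ T.StableF S₀).sup fun S₀ =>
    T.weightF wv we S₀ +
      pairWeight wv we a b (∀ u ∈ S₀, T.SAnti a u) (∀ u ∈ S₀, T.SAnti b u)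

theorem weightF_inter_pair (hwe : ∀ u v, we u v = we v u) (hab : T.Switch a b) :
    T.weightF wv we (S ∩ {a, b}) = pairWeight wv we a b (a ∈ S) (b ∈ S) := by
  have hne := hab.1
  by_cases ha : a ∈ S <;> by_cases hb : b ∈ S
  · rw [Finset.inter_eq_right.mpr (Finset.insert_subset ha (Finset.singleton_subset_iff.mpr hb)),
      weightF_pair hwe hab]
    simp [pairWeight, ha, hb]
  · rw [show S ∩ {a, b} = {a} by grind, weightF_singleton]
    simp [pairWeight, ha, hb]
  · rw [show S ∩ {a, b} = {b} by grind, weightF_singleton]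
    simp [pairWeight, ha, hb]
  · rw [show S ∩ {a, b} = ∅ by grind, weightF_empty]
    simp [pairWeight, ha, hb]

theorem weightF_eq_add_pairWeight (hmono : T.Monogamous) (hwe : ∀ u v, we u v = we v u)
    (hab : T.Switch a b) (hS : T.StableF S) :
    T.weightF wv we S = T.weightF wv we (S \ {a, b}) + pairWeight wv we a b (a ∈ S) (b ∈ S) := by
  rw [← weightF_inter_pair hwe hab]
  refine weightF_eq_sdiff_add_inter hwe hS _ fun x hx y hy hs => hy ?_
  simp only [Finset.mem_insert, Finset.mem_singleton] at hx ⊢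
  rcases hx with rfl | rfl
  exacts [Or.inr (hmono x y b hs hab), Or.inl (hmono x y a hs hab.symm)]

theorem Monogamous.sAnti_of_stableF (hmono : T.Monogamous) (hab : T.Switch a b)
    (hS : T.StableF S) (ha : a ∈ S) : ∀ u ∈ S \ {a, b}, T.SAnti a u := by
  intro u hu
  simp only [Finset.mem_sdiff, Finset.mem_insert, Finset.mem_singleton, not_or] at hu
  exact hmono.sAnti_of_anti hab hu.2.2 (hS a ha u hu.1 (Ne.symm hu.2.1))

open Classical in
theorem alphaW_eq_alphaSplit [Fintype V] (hmono : T.Monogamous) (hw : T.GoodWeights wv we)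
    (hab : T.Switch a b) : T.alphaW wv we = T.alphaSplit wv we a b := by
  obtain ⟨hwe, hwab⟩ := hw
  have hmax := (hwab a b hab).1
  have hwa : wv a ≤ we a b := le_of_max_le_left hmax
  have hwb : wv b ≤ we a b := le_of_max_le_right hmax
  refine alphaW_eq_sup _ _ (fun S hS => ⟨S \ {a, b}, ?_, ?_⟩) fun S₀ hS₀ => ?_
  · simp only [Finset.mem_filter, Finset.mem_univ, Finset.mem_sdiff, Finset.mem_insert,
      Finset.mem_singleton, true_or, or_true, not_true, and_false, not_false_eq_true, true_and]
    exact hS.mono Finset.sdiff_subset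
  · rw [weightF_eq_add_pairWeight hmono hwe hab hS]
    refine Nat.add_le_add_left (pairWeight_mono hwa hwb ?_ ?_) _
    · simpa using hmono.sAnti_of_stableF hab hS
    · simpa [Finset.pair_comm a b] using hmono.sAnti_of_stableF hab.symm hS
  obtain ⟨ha₀, hb₀, hS₀⟩ := (Finset.mem_filter.mp hS₀).2
  set X : Finset V := ({a, b} : Finset V).filter fun x =>
    (x = a → ∀ u ∈ S₀, T.SAnti a u) ∧ (x = b → ∀ u ∈ S₀, T.SAnti b u) with hX
  have hXab : X ⊆ {a, b} := Finset.filter_subset _ _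
  have hstab : T.StableF (S₀ ∪ X) := by
    refine hS₀.union ((stableF_pair ⟨hab.1, Or.inr hab.2⟩).mono hXab) fun u hu x hx => ?_
    obtain ⟨hx, hxa, hxb⟩ := Finset.mem_filter.mp hx
    simp only [Finset.mem_insert, Finset.mem_singleton] at hx
    rcases hx with rfl | rfl
    exacts [(hxa rfl u hu).symm, (hxb rfl u hu).symm]
  have hcore : (S₀ ∪ X) \ {a, b} = S₀ := by
    ext u
    have := @hXab u
    simp only [Finset.mem_sdiff, Finset.mem_union, Finset.mem_insert, Finset.mem_singleton]
      at this ⊢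
    grind
  refine ⟨S₀ ∪ X, hstab, ?_⟩
  rw [weightF_eq_add_pairWeight hmono hwe hab hstab, hcore]
  refine Nat.add_le_add_left (pairWeight_mono hwa hwb ?_ ?_) _ <;>
    simp +contextual [hX, hab.1, hab.1.symm]

end Pair

section Expansion

variable {V : Type*} {T : Trigraph V} {T' : Trigraph (Option V)} {wv : V → ℕ}
  {we : V → V → ℕ} {wv' : Option V → ℕ} {a b : V}

theorem weO_comm (hwe : ∀ u v, we u v = we v u) (x y : Option V) : weO we x y = weO we y x := by
  cases x <;> cases y <;> simp [weO, hwe]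

/-- What `T_{a→S}` and `T_{a→K}` have in common (the new vertex `a'` is `none`): they only
differ on the pair `a a'`. -/
structure IsPairExpansion (T : Trigraph V) (T' : Trigraph (Option V)) (a b : V) : Prop where
  θ_some_some : ∀ u v, ¬(u = a ∧ v = b) → ¬(u = b ∧ v = a) → T'.θ (some u) (some v) = T.θ u v
  θ_some_a_some_b : T'.θ (some a) (some b) = 1
  θ_none_ne_zero : ∀ u, T'.θ none (some u) ≠ 0
  θ_none_eq_neg_one_iff : ∀ u, u ≠ a → (T'.θ none (some u) = -1 ↔ ¬(T.Adj a u ∧ u ≠ b))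

theorem IsPairExpansion.sAnti_none_some_b (hE : T.IsPairExpansion T' a b) (hab : T.Switch a b) :
    T'.SAnti none (some b) :=
  ⟨by simp, (hE.θ_none_eq_neg_one_iff b hab.1.symm).mpr fun h => h.2 rfl⟩

theorem IsPairExpansion.not_mem_and_mem (hE : T.IsPairExpansion T' a b) (hab : T.Switch a b)
    {X : Finset (Option V)} (hX : T'.StrongStable ↑X) : ¬(some a ∈ X ∧ some b ∈ X) := fun h => by
  have := (hX h.1 h.2 (by simpa using hab.1)).2
  rw [hE.θ_some_a_some_b] at this
  omega

variable [DecidableEq V] {S' : Finset (Option V)}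

theorem IsPairExpansion.not_switch (hE : T.IsPairExpansion T' a b) (hmono : T.Monogamous)
    (hab : T.Switch a b) :
    ∀ x ∈ ({some a, some b, none} : Finset (Option V)), ∀ y, ¬T'.Switch x y := by
  rintro x hx (_ | u) ⟨hxy, h0⟩
  all_goals simp only [Finset.mem_insert, Finset.mem_singleton] at hx
  · rcases hx with rfl | rfl | rfl
    · exact hE.θ_none_ne_zero a ((T'.symm _ _).trans h0)
    · exact hE.θ_none_ne_zero b ((T'.symm _ _).trans h0)
    · exact hxy rfl
  · rcases hx with rfl | rfl | rfl
    · by_cases hub : u = b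
      · subst hub
        rw [hE.θ_some_a_some_b] at h0
        omega
      · rw [hE.θ_some_some a u (fun h => hub h.2) (fun h => hab.1 h.1)] at h0
        exact hub (hmono a u b ⟨fun h => hxy (congrArg some h), h0⟩ hab)
    · by_cases hua : u = a
      · subst hua
        rw [T'.symm, hE.θ_some_a_some_b] at h0
        omega
      · rw [hE.θ_some_some b u (fun h => hab.1 h.1.symm) (fun h => hua h.2)] at h0
        exact hua (hmono b u a ⟨fun h => hxy (congrArg some h), h0⟩ hab.symm)
    · exact hE.θ_none_ne_zero u h0

theorem IsPairExpansion.stableF_core (hE : T.IsPairExpansion T' a b) (hS' : T'.StableF S') :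
    T.StableF (S'.eraseNone \ {a, b}) := by
  intro u hu v hv huv
  simp only [Finset.mem_sdiff, Finset.mem_eraseNone, Finset.mem_insert, Finset.mem_singleton,
    not_or] at hu hv
  have h := hS' _ hu.1 _ hv.1 (Option.some_injective V |>.ne huv)
  exact ⟨huv, hE.θ_some_some u v (fun h => hv.2.2 h.2) (fun h => hv.2.1 h.2) ▸ h.2⟩

theorem IsPairExpansion.sAnti_a_core (hE : T.IsPairExpansion T' a b) (hmono : T.Monogamous)
    (hab : T.Switch a b) (hS' : T'.StableF S') (h : some a ∈ S' ∨ none ∈ S') :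
    ∀ u ∈ S'.eraseNone \ {a, b}, T.SAnti a u := by
  intro u hu
  simp only [Finset.mem_sdiff, Finset.mem_eraseNone, Finset.mem_insert, Finset.mem_singleton,
    not_or] at hu
  obtain ⟨huS, hua, hub⟩ := hu
  rcases h with ha | hn
  · have h := hS' _ ha _ huS (by simpa using Ne.symm hua)
    exact hmono.sAnti_of_anti hab hub
      ⟨Ne.symm hua, hE.θ_some_some a u (fun h => hub h.2) (fun h => hab.1 h.1) ▸ h.2⟩
  · have h := (hS' _ hn _ huS (by simp)).2.resolve_right (hE.θ_none_ne_zero u)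
    have hnadj : ¬T.Adj a u := fun hadj => (hE.θ_none_eq_neg_one_iff u hua).mp h ⟨hadj, hub⟩
    refine ⟨Ne.symm hua, ?_⟩
    rcases T.range a u (Ne.symm hua) with h | h | h
    exacts [h, absurd ⟨Ne.symm hua, Or.inl h⟩ hnadj, absurd ⟨Ne.symm hua, Or.inr h⟩ hnadj]

theorem IsPairExpansion.sAnti_b_core (hE : T.IsPairExpansion T' a b) (hmono : T.Monogamous)
    (hab : T.Switch a b) (hS' : T'.StableF S') (h : some b ∈ S') :
    ∀ u ∈ S'.eraseNone \ {a, b}, T.SAnti b u := by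
  intro u hu
  simp only [Finset.mem_sdiff, Finset.mem_eraseNone, Finset.mem_insert, Finset.mem_singleton,
    not_or] at hu
  obtain ⟨huS, hua, hub⟩ := hu
  have h := hS' _ h _ huS (by simpa using Ne.symm hub)
  exact hmono.sAnti_of_anti hab.symm hua
    ⟨Ne.symm hub, hE.θ_some_some b u (fun h => hab.1 h.1.symm) (fun h => hua h.2) ▸ h.2⟩

theorem IsPairExpansion.weightF_eq_core_add_sum (hE : T.IsPairExpansion T' a b)
    (hmono : T.Monogamous) (hab : T.Switch a b) (hwe : ∀ u v, we u v = we v u)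
    (hwv : ∀ v, v ≠ a → v ≠ b → wv' (some v) = wv v) (hS' : T'.StableF S') :
    T'.weightF wv' (weO we) S' = T.weightF wv we (S'.eraseNone \ {a, b})
      + ∑ x ∈ S' ∩ {some a, some b, none}, wv' x := by
  have hnsw := hE.not_switch hmono hab
  rw [weightF_eq_sdiff_add_inter (weO_comm hwe) hS' _ fun x hx y _ => hnsw x hx y]
  have hcore : S' \ {some a, some b, none}
      = (S'.eraseNone \ {a, b}).map Function.Embedding.some := by
    ext (_ | v) <;> simp [and_comm]
  congr 1
  · rw [hcore]
    refine weightF_map _ (fun u hu v hv => ?_) (fun v hv => ?_) fun _ _ _ _ => rfl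
    · simp only [Finset.mem_sdiff, Finset.mem_insert, Finset.mem_singleton, not_or] at hu hv
      exact hE.θ_some_some u v (fun h => hv.2.2 h.2) (fun h => hv.2.1 h.2)
    · simp only [Finset.mem_sdiff, Finset.mem_insert, Finset.mem_singleton, not_or] at hv
      exact hwv v hv.2.1 hv.2.2
  · refine weightF_eq_sum fun x hx y hy hxy => ?_
    obtain ⟨hxS, hxP⟩ := Finset.mem_inter.mp hx
    exact (hS' x hxS y (Finset.mem_inter.mp hy).1 hxy).sAnti_of_not_switch (hnsw x hxP y)

theorem IsPairExpansion.stableF_weightF_map_union (hE : T.IsPairExpansion T' a b)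
    (hmono : T.Monogamous) (hab : T.Switch a b) (hwe : ∀ u v, we u v = we v u)
    (hwv : ∀ v, v ≠ a → v ≠ b → wv' (some v) = wv v) {S₀ : Finset V} (hS₀ : T.StableF S₀)
    (ha₀ : a ∉ S₀) (hb₀ : b ∉ S₀) {X : Finset (Option V)}
    (hXP : X ⊆ {some a, some b, none}) (hX : T'.StrongStable ↑X)
    (hXa : some a ∈ X ∨ none ∈ X → ∀ u ∈ S₀, T.SAnti a u)
    (hXb : some b ∈ X → ∀ u ∈ S₀, T.SAnti b u) :
    T'.StableF (S₀.map Function.Embedding.some ∪ X) ∧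
      T'.weightF wv' (weO we) (S₀.map Function.Embedding.some ∪ X)
        = T.weightF wv we S₀ + ∑ x ∈ X, wv' x := by
  have hne : ∀ v ∈ S₀, v ≠ a ∧ v ≠ b := fun v hv =>
    ⟨ne_of_mem_of_not_mem hv ha₀, ne_of_mem_of_not_mem hv hb₀⟩
  have hstab : T'.StableF (S₀.map Function.Embedding.some ∪ X) := by
    refine (hS₀.map _ fun u hu v hv => ?_).union hX.stableF fun _ hu x hx => ?_
    · exact hE.θ_some_some u v (fun h => (hne u hu).1 h.1) (fun h => (hne u hu).2 h.1)
    obtain ⟨v, hv, rfl⟩ := Finset.mem_map.mp hu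
    obtain ⟨hva, hvb⟩ := hne v hv
    have hxP := hXP hx
    simp only [Finset.mem_insert, Finset.mem_singleton] at hxP
    rcases hxP with rfl | rfl | rfl
    · refine ⟨by simpa using hva, ?_⟩
      rw [Function.Embedding.some_apply, hE.θ_some_some v a (fun h => hva h.1) (fun h => hvb h.1)]
      exact (hXa (Or.inl hx) v hv).symm.2
    · refine ⟨by simpa using hvb, ?_⟩
      rw [Function.Embedding.some_apply, hE.θ_some_some v b (fun h => hva h.1) (fun h => hvb h.1)]
      exact (hXb hx v hv).symm.2
    · refine ⟨by simp, ?_⟩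
      rw [Function.Embedding.some_apply, T'.symm, hE.θ_none_eq_neg_one_iff v hva]
      exact fun h => (hXa (Or.inr hx) v hv).not_adj h.1
  refine ⟨hstab, ?_⟩
  rw [hE.weightF_eq_core_add_sum hmono hab hwe hwv hstab]
  congr 2
  · ext v
    have := @hXP (some v)
    simp only [Finset.mem_insert, Finset.mem_singleton] at this
    simp only [Finset.eraseNone_union, Finset.eraseNone_map_some, Finset.mem_sdiff,
      Finset.mem_union, Finset.mem_eraseNone, Finset.mem_insert, Finset.mem_singleton, not_or]
    grind
  · ext x
    have := @hXP x
    simp only [Finset.mem_insert, Finset.mem_singleton] at this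
    simp only [Finset.mem_inter, Finset.mem_union, Finset.mem_map, Function.Embedding.some_apply,
      Finset.mem_insert, Finset.mem_singleton]
    grind

open Classical in
theorem IsPairExpansion.alphaW_eq_alphaSplit [Fintype V] (hE : T.IsPairExpansion T' a b)
    (hmono : T.Monogamous) (hw : T.GoodWeights wv we) (hab : T.Switch a b)
    (hwv : ∀ v, v ≠ a → v ≠ b → wv' (some v) = wv v)
    (hle : ∀ X ⊆ ({some a, some b, none} : Finset (Option V)), T'.StrongStable ↑X →
      ∑ x ∈ X, wv' x ≤ pairWeight wv we a b (some a ∈ X ∨ none ∈ X) (some b ∈ X))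
    (hge : ∀ p q : Bool, ∃ X ⊆ ({some a, some b, none} : Finset (Option V)),
      T'.StrongStable ↑X ∧ (some a ∈ X ∨ none ∈ X → p) ∧ (some b ∈ X → q) ∧
        pairWeight wv we a b p q ≤ ∑ x ∈ X, wv' x) :
    T'.alphaW wv' (weO we) = T.alphaSplit wv we a b := by
  obtain ⟨hwe, hwab⟩ := hw
  have hmax := (hwab a b hab).1
  have hwa : wv a ≤ we a b := le_of_max_le_left hmax
  have hwb : wv b ≤ we a b := le_of_max_le_right hmax
  refine alphaW_eq_sup _ _ (fun S' hS' => ⟨S'.eraseNone \ {a, b}, ?_, ?_⟩) fun S₀ hS₀ => ?_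
  · simp only [Finset.mem_filter, Finset.mem_univ, Finset.mem_sdiff, Finset.mem_insert,
      Finset.mem_singleton, true_or, or_true, not_true, and_false, not_false_eq_true, true_and]
    exact hE.stableF_core hS'
  · rw [hE.weightF_eq_core_add_sum hmono hab hwe hwv hS']
    refine Nat.add_le_add_left ((hle _ Finset.inter_subset_right ?_).trans
      (pairWeight_mono hwa hwb ?_ ?_)) _
    · intro x hx y hy hxy
      exact (hS' x (Finset.mem_inter.mp hx).1 y (Finset.mem_inter.mp hy).1 hxy).sAnti_of_not_switch
        (hE.not_switch hmono hab x (Finset.mem_inter.mp hx).2 y)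
    · simpa using hE.sAnti_a_core hmono hab hS'
    · simpa using hE.sAnti_b_core hmono hab hS'
  obtain ⟨ha₀, hb₀, hS₀⟩ := (Finset.mem_filter.mp hS₀).2
  obtain ⟨X, hXP, hX, hXa, hXb, hXw⟩ := hge (∀ u ∈ S₀, T.SAnti a u) (∀ u ∈ S₀, T.SAnti b u)
  obtain ⟨hstab, hweight⟩ := hE.stableF_weightF_map_union hmono hab hwe hwv hS₀ ha₀ hb₀ hXP hX
    (by simpa using hXa) (by simpa using hXb)
  exact ⟨_, hstab, hweight ▸ Nat.add_le_add_left hXw _⟩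

theorem isPairExpansion_expandS (T : Trigraph V) (a b : V) :
    T.IsPairExpansion (T.expandS a b) a b where
  θ_some_some u v h₁ h₂ := by
    simp only [expandS]
    rw [if_neg (not_or.mpr ⟨h₁, h₂⟩)]
  θ_some_a_some_b := by simp [expandS]
  θ_none_ne_zero u := by
    simp only [expandS]
    split <;> simp
  θ_none_eq_neg_one_iff u _ := by
    simp [expandS]

theorem isPairExpansion_expandK (T : Trigraph V) (a b : V) :
    T.IsPairExpansion (T.expandK a b) a b where
  θ_some_some u v h₁ h₂ := by
    simp only [expandK]
    rw [if_neg (not_or.mpr ⟨h₁, h₂⟩)]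
  θ_some_a_some_b := by simp [expandK]
  θ_none_ne_zero u := by
    simp only [expandK]
    split <;> simp
  θ_none_eq_neg_one_iff u hu := by
    simp [expandK, hu]

theorem alphaW_expandS [Fintype V] (hmono : T.Monogamous) (hw : T.GoodWeights wv we)
    (hab : T.Switch a b) :
    (T.expandS a b).alphaW (wvS wv we a b) (weO we) = T.alphaSplit wv we a b := by
  obtain ⟨hmax, hsum⟩ := hw.2 a b hab
  have hwa : wv a ≤ we a b := le_of_max_le_left hmax
  have hwb : wv b ≤ we a b := le_of_max_le_right hmax
  have hE := isPairExpansion_expandS T a b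
  have hθ : (T.expandS a b).SAnti (some a) none := ⟨by simp, by simp [expandS, Adj]⟩
  refine hE.alphaW_eq_alphaSplit hmono hw hab (fun v hv _ => if_neg hv) (fun X hXP hX => ?_)
    fun p q => ?_
  · have := hE.not_mem_and_mem hab hX
    rw [Finset.sum_eq_of_subset_triple (by simpa using hab.1) (by simp) (by simp) _ hXP]
    by_cases h₁ : some a ∈ X <;> by_cases h₂ : some b ∈ X <;> by_cases h₃ : none ∈ X <;>
      simp_all [pairWeight, wvS, hab.1.symm]
    omega
  · cases p <;> cases q
    · exact ⟨∅, by simp, by simp [StrongStable], by simp, by simp, by simp [pairWeight]⟩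
    · exact ⟨{some b}, by simp, by simp [StrongStable], by simp [hab.1], by simp,
        by simp [pairWeight, wvS, hab.1.symm]⟩
    · refine ⟨{some a, none}, by simp [Finset.insert_subset_iff], strongStable_pair hθ, by simp,
        by simp [hab.1.symm], ?_⟩
      rw [Finset.sum_pair (by simp)]
      simp only [pairWeight, wvS, ↓reduceIte]
      omega
    · refine ⟨{some b, none}, by simp, strongStable_pair (hE.sAnti_none_some_b hab).symm,
        by simp, by simp, ?_⟩
      rw [Finset.sum_pair (by simp)]
      simp only [pairWeight, wvS, hab.1.symm, ↓reduceIte]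
      omega

theorem alphaW_expandK [Fintype V] (hmono : T.Monogamous) (hw : T.GoodWeights wv we)
    (hab : T.Switch a b) :
    (T.expandK a b).alphaW (wvK wv we a b) (weO we) = T.alphaSplit wv we a b := by
  obtain ⟨hmax, hsum⟩ := hw.2 a b hab
  have hwa : wv a ≤ we a b := le_of_max_le_left hmax
  have hwb : wv b ≤ we a b := le_of_max_le_right hmax
  have hE := isPairExpansion_expandK T a b
  have hθ : (T.expandK a b).θ (some a) none = 1 := by simp [expandK]
  refine hE.alphaW_eq_alphaSplit hmono hw hab (fun _ _ _ => rfl) (fun X hXP hX => ?_)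
    fun p q => ?_
  · have := hE.not_mem_and_mem hab hX
    have hK : ¬(some a ∈ X ∧ none ∈ X) := fun h => by
      have := (hX h.1 h.2 (by simp)).2
      omega
    rw [Finset.sum_eq_of_subset_triple (by simpa using hab.1) (by simp) (by simp) _ hXP]
    by_cases h₁ : some a ∈ X <;> by_cases h₂ : some b ∈ X <;> by_cases h₃ : none ∈ X <;>
      simp_all [pairWeight, wvK]
  · cases p <;> cases q
    · exact ⟨∅, by simp, by simp [StrongStable], by simp, by simp, by simp [pairWeight]⟩
    · exact ⟨{some b}, by simp, by simp [StrongStable], by simp [hab.1], by simp,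
        by simp [pairWeight, wvK]⟩
    · exact ⟨{some a}, by simp, by simp [StrongStable], by simp, by simp [hab.1.symm],
        by simp [pairWeight, wvK]⟩
    · refine ⟨{some b, none}, by simp, strongStable_pair (hE.sAnti_none_some_b hab).symm,
        by simp, by simp, ?_⟩
      rw [Finset.sum_pair (by simp)]
      simp only [pairWeight, wvK]
      omega

end Expansion

end Trigraph

/-- For a weighted monogamous trigraph `T` with a switchable pair `ab`,
`α(T_{a→S}) = α(T_{b→S}) = α(T_{a→K}) = α(T_{b→K}) = α(T)`, where the expanded trigraphs
carry the weights described in the paper. -/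
theorem expand_alpha {V : Type} [Fintype V] [DecidableEq V] (T : Trigraph V)
    (hmono : T.Monogamous) (wv : V → ℕ) (we : V → V → ℕ) (hw : T.GoodWeights wv we)
    (a b : V) (hab : T.Switch a b) :
    (T.expandS a b).alphaW (Trigraph.wvS wv we a b) (Trigraph.weO we) = T.alphaW wv we ∧
    (T.expandS b a).alphaW (Trigraph.wvS wv we b a) (Trigraph.weO we) = T.alphaW wv we ∧
    (T.expandK a b).alphaW (Trigraph.wvK wv we a b) (Trigraph.weO we) = T.alphaW wv we ∧
    (T.expandK b a).alphaW (Trigraph.wvK wv we b a) (Trigraph.weO we) = T.alphaW wv we := by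
  refine ⟨?_, ?_, ?_, ?_⟩
  · rw [T.alphaW_expandS hmono hw hab, T.alphaW_eq_alphaSplit hmono hw hab]
  · rw [T.alphaW_expandS hmono hw hab.symm, T.alphaW_eq_alphaSplit hmono hw hab.symm]
  · rw [T.alphaW_expandK hmono hw hab, T.alphaW_eq_alphaSplit hmono hw hab]
  · rw [T.alphaW_expandK hmono hw hab.symm, T.alphaW_eq_alphaSplit hmono hw hab.symm]
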